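/- Let T be the 2-homogeneous rooted tree (q = 1), let φ be a self-map of T and let 1 ≤ p < ∞. Then C_φ is a bounded operator on T_{p,0} (equivalently, C_φ maps T_{p,0} into T_{p,0}) if and only if |φ(v)| → ∞ as |v| → ∞. -/

import Mathlib

open scoped BigOperators Classical

noncomputable section

/-- `treeC q n` is the number `c_n` of vertices at level `n` of the
`(q+1)`-homogeneous rooted tree: `c_0 = 1` and `c_n = (q+1) q^(n-1)` for `n ≥ 1`. -/
def treeC (q n : ℕ) : ℕ := if n = 0 then 1 else (q + 1) * q ^ (n - 1)

/-- An abstract `(q+1)`-homogeneous rooted tree, described by its vertex set, root,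
level function `|·|` (graph distance to the root), and the level counts:
level `n` contains exactly `c_n = treeC q n` vertices. -/
structure HomTree (q : ℕ) where
  V : Type
  root : V
  level : V → ℕ
  level_eq_zero_iff : ∀ v : V, level v = 0 ↔ v = root
  finiteLevel : ∀ n : ℕ, {v : V | level v = n}.Finite
  card_level : ∀ n : ℕ, (finiteLevel n).toFinset.card = treeC q n

namespace HomTree

variable {q : ℕ} (T : HomTree q)

/-- The set `D_n` of vertices of level `n`, as a finset. -/
def levelFinset (n : ℕ) : Finset T.V := (T.finiteLevel n).toFinset

/-- `M_p(n, f)` for `0 < p < ∞`: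
`M_p(n,f) = ((1/c_n) ∑_{|v|=n} |f v|^p)^(1/p)` (which equals `|f o|` for `n = 0`). -/
def Mp (p : ℝ) (n : ℕ) (f : T.V → ℂ) : ℝ :=
  ((1 / (treeC q n : ℝ)) * ∑ v ∈ T.levelFinset n, ‖f v‖ ^ p) ^ (1 / p)

/-- `M_∞(n, f) = max_{|v| = n} |f v|`. -/
def Minf (n : ℕ) (f : T.V → ℂ) : ℝ :=
  sSup ((fun v => ‖f v‖) '' {v : T.V | T.level v = n})

/-- `f ∈ T_p`, i.e. `‖f‖_p = sup_n M_p(n,f) < ∞`. -/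
def memTp (p : ℝ) (f : T.V → ℂ) : Prop := BddAbove (Set.range fun n => T.Mp p n f)

/-- `‖f‖_p = sup_n M_p(n, f)`. -/
def normTp (p : ℝ) (f : T.V → ℂ) : ℝ := ⨆ n, T.Mp p n f

/-- `f ∈ T_∞`. -/
def memTinf (f : T.V → ℂ) : Prop := BddAbove (Set.range fun n => T.Minf n f)

/-- `‖f‖_∞ = sup_n M_∞(n, f)`. -/
def normTinf (f : T.V → ℂ) : ℝ := ⨆ n, T.Minf n f

/-- `f ∈ T_{p,0}`: `f ∈ T_p` and `M_p(n,f) → 0` as `n → ∞`. -/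
def memTp0 (p : ℝ) (f : T.V → ℂ) : Prop :=
  T.memTp p f ∧ Filter.Tendsto (fun n => T.Mp p n f) Filter.atTop (nhds 0)

/-- `f ∈ T_{∞,0}`. -/
def memTinf0 (f : T.V → ℂ) : Prop :=
  T.memTinf f ∧ Filter.Tendsto (fun n => T.Minf n f) Filter.atTop (nhds 0)

/-- `N_φ(n, w)`: the number of preimages of `w` under `φ` at level `n`. -/
def Nphi (phi : T.V → T.V) (n : ℕ) (w : T.V) : ℕ :=
  ((T.levelFinset n).filter fun v => phi v = w).card

/-- `N_{m,n} = max_{|w| = m} N_φ(n, w)`. -/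
def Nmax (phi : T.V → T.V) (m n : ℕ) : ℕ :=
  (T.levelFinset m).sup fun w => T.Nphi phi n w

/-- `C_φ` is a bounded operator on `T_p`: it maps `T_p` into `T_p` and
`‖f ∘ φ‖_p ≤ C ‖f‖_p` for some constant `C`. -/
def BoundedCompTp (p : ℝ) (phi : T.V → T.V) : Prop :=
  (∀ f : T.V → ℂ, T.memTp p f → T.memTp p (f ∘ phi)) ∧
  ∃ C : ℝ, ∀ f : T.V → ℂ, T.memTp p f → T.normTp p (f ∘ phi) ≤ C * T.normTp p f

/-- The operator norm of `C_φ` on `T_p`: `sup {‖f ∘ φ‖_p : f ∈ T_p, ‖f‖_p = 1}`. -/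
def opNormTp (p : ℝ) (phi : T.V → T.V) : ℝ :=
  sSup {x : ℝ | ∃ f : T.V → ℂ, T.memTp p f ∧ T.normTp p f = 1 ∧ x = T.normTp p (f ∘ phi)}

/-- `C_φ` is a bounded operator on `T_{p,0}`. -/
def BoundedCompTp0 (p : ℝ) (phi : T.V → T.V) : Prop :=
  (∀ f : T.V → ℂ, T.memTp0 p f → T.memTp0 p (f ∘ phi)) ∧
  ∃ C : ℝ, ∀ f : T.V → ℂ, T.memTp0 p f → T.normTp p (f ∘ phi) ≤ C * T.normTp p f

/-- The operator norm of `C_φ` on `T_{p,0}`. -/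
def opNormTp0 (p : ℝ) (phi : T.V → T.V) : ℝ :=
  sSup {x : ℝ | ∃ f : T.V → ℂ, T.memTp0 p f ∧ T.normTp p f = 1 ∧ x = T.normTp p (f ∘ phi)}

/-- `C_φ` is a bounded operator on `T_{∞,0}`. -/
def BoundedCompTinf0 (phi : T.V → T.V) : Prop :=
  (∀ f : T.V → ℂ, T.memTinf0 f → T.memTinf0 (f ∘ phi)) ∧
  ∃ C : ℝ, ∀ f : T.V → ℂ, T.memTinf0 f → T.normTinf (f ∘ phi) ≤ C * T.normTinf f

end HomTree

/-!
On the 2-homogeneous tree every level has one or two vertices, so `M_p(n, f)` is comparable to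
`max_{|v| = n} |f v|`: the mean over a level is at most the maximum, and
`|f v| ≤ 2^{1/p} M_p(|v|, f)`. Hence `f ∈ T_{p,0}` exactly when `f v → 0` as `|v| → ∞`, and
`‖f ∘ φ‖_p ≤ 2^{1/p} ‖f‖_p` for every `φ`. If `|φ v| → ∞`, then `f ∘ φ` inherits the decay of `f`.
Conversely, the indicator of the ball `{|w| < A}` lies in `T_{p,0}`, and its composition with `φ`
decays only if `|φ v| ≥ A` for all `v` far enough from the root.
-/

open Filter Topology

namespace HomTree

section general

variable {q : ℕ} (T : HomTree q) {p : ℝ}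

theorem mem_levelFinset {v : T.V} {n : ℕ} : v ∈ T.levelFinset n ↔ T.level v = n :=
  Set.Finite.mem_toFinset _

theorem Mp_nonneg (p : ℝ) (n : ℕ) (f : T.V → ℂ) : 0 ≤ T.Mp p n f := by
  unfold Mp
  positivity

theorem Mp_le_normTp {f : T.V → ℂ} (hf : T.memTp p f) (n : ℕ) : T.Mp p n f ≤ T.normTp p f :=
  le_ciSup hf n

theorem Mp_le_of_forall_norm_le (hp : 0 < p) {n : ℕ} {f : T.V → ℂ} {B : ℝ} (hB : 0 ≤ B)
    (h : ∀ v, T.level v = n → ‖f v‖ ≤ B) : T.Mp p n f ≤ B := by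
  have hsum : ∑ v ∈ T.levelFinset n, ‖f v‖ ^ p ≤ treeC q n * B ^ p :=
    calc ∑ v ∈ T.levelFinset n, ‖f v‖ ^ p
        ≤ ∑ _v ∈ T.levelFinset n, B ^ p := Finset.sum_le_sum fun v hv =>
          Real.rpow_le_rpow (norm_nonneg _) (h v (T.mem_levelFinset.1 hv)) hp.le
      _ = treeC q n * B ^ p := by rw [Finset.sum_const, nsmul_eq_mul, levelFinset, T.card_level]
  have hmean : 1 / (treeC q n : ℝ) * ∑ v ∈ T.levelFinset n, ‖f v‖ ^ p ≤ B ^ p := by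
    -- `c_n = 0` (possible only for `q = 0`) makes `1 / c_n = 0`
    rcases (Nat.cast_nonneg (treeC q n) : (0 : ℝ) ≤ treeC q n).eq_or_lt with hc | hc
    · rw [← hc, div_zero, zero_mul]
      positivity
    · rwa [one_div, inv_mul_le_iff₀ hc]
  calc T.Mp p n f ≤ (B ^ p) ^ (1 / p) := Real.rpow_le_rpow (by positivity) hmean (by positivity)
    _ = B := by rw [one_div, Real.rpow_rpow_inv hB hp.ne']

theorem norm_le_treeC_rpow_mul_Mp (hp : 0 < p) (f : T.V → ℂ) {n : ℕ} {v : T.V}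
    (hv : T.level v = n) : ‖f v‖ ≤ (treeC q n : ℝ) ^ (1 / p) * T.Mp p n f := by
  have hmem : v ∈ T.levelFinset n := T.mem_levelFinset.2 hv
  have hc : (0 : ℝ) < treeC q n := by
    rw [← T.card_level n]
    exact_mod_cast Finset.card_pos.2 ⟨v, hmem⟩
  have hsingle : ‖f v‖ ^ p ≤ treeC q n * (1 / treeC q n * ∑ w ∈ T.levelFinset n, ‖f w‖ ^ p) := by
    rw [one_div, mul_inv_cancel_left₀ hc.ne']
    exact Finset.single_le_sum (f := fun w => ‖f w‖ ^ p) (fun w _ => by positivity) hmem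
  calc ‖f v‖ = (‖f v‖ ^ p) ^ (1 / p) := by rw [one_div, Real.rpow_rpow_inv (norm_nonneg _) hp.ne']
    _ ≤ (treeC q n * (1 / treeC q n * ∑ w ∈ T.levelFinset n, ‖f w‖ ^ p)) ^ (1 / p) :=
      Real.rpow_le_rpow (by positivity) hsingle (by positivity)
    _ = (treeC q n : ℝ) ^ (1 / p) * T.Mp p n f := Real.mul_rpow hc.le (by positivity)

theorem tendsto_Mp_zero_of_tendsto_norm (hp : 0 < p) {f : T.V → ℂ}
    (hf : Tendsto (fun v => ‖f v‖) (comap T.level atTop) (𝓝 0)) :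
    Tendsto (fun n => T.Mp p n f) atTop (𝓝 0) := by
  rw [(atTop_basis.comap T.level).tendsto_iff Metric.nhds_basis_closedBall] at hf
  rw [atTop_basis.tendsto_iff Metric.nhds_basis_closedBall]
  intro ε hε
  obtain ⟨N, -, hN⟩ := hf ε hε
  refine ⟨N, trivial, fun n hn => ?_⟩
  rw [mem_closedBall_zero_iff, Real.norm_of_nonneg (T.Mp_nonneg p n f)]
  refine T.Mp_le_of_forall_norm_le hp hε.le fun v hv => ?_
  simpa using hN v (show N ≤ T.level v from hv ▸ hn)

theorem memTp0_indicator_level_lt (hp : 0 < p) (A : ℕ) :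
    T.memTp0 p fun w => if T.level w < A then 1 else 0 := by
  have hle : ∀ n, T.Mp p n (fun w => if T.level w < A then 1 else 0) ≤ 1 := fun n =>
    T.Mp_le_of_forall_norm_le hp zero_le_one fun v _ => by split_ifs <;> simp
  refine ⟨⟨1, Set.forall_mem_range.2 hle⟩, T.tendsto_Mp_zero_of_tendsto_norm hp ?_⟩
  refine tendsto_const_nhds.congr' ?_
  filter_upwards [preimage_mem_comap (Ici_mem_atTop A)] with v hv
  simp [not_lt.2 (show A ≤ T.level v from hv)]

theorem tendsto_level_comp_iff {phi : T.V → T.V} :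
    Tendsto (T.level ∘ phi) (comap T.level atTop) atTop ↔
      ∀ A : ℕ, ∃ N : ℕ, ∀ v : T.V, N ≤ T.level v → A ≤ T.level (phi v) := by
  rw [(atTop_basis.comap T.level).tendsto_iff atTop_basis]
  simp

end general

section two_homogeneous

variable (T : HomTree 1) {p : ℝ}

theorem treeC_one_le_two (n : ℕ) : (treeC 1 n : ℝ) ≤ 2 := by
  unfold treeC
  split_ifs <;> norm_num

theorem norm_le_two_rpow_mul_Mp (hp : 0 < p) (f : T.V → ℂ) {n : ℕ} {v : T.V}
    (hv : T.level v = n) : ‖f v‖ ≤ 2 ^ (1 / p) * T.Mp p n f :=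
  (T.norm_le_treeC_rpow_mul_Mp hp f hv).trans <| mul_le_mul_of_nonneg_right
    (Real.rpow_le_rpow (by positivity) (treeC_one_le_two n) (by positivity)) (T.Mp_nonneg p n f)

theorem tendsto_Mp_zero_iff (hp : 0 < p) (f : T.V → ℂ) :
    Tendsto (fun n => T.Mp p n f) atTop (𝓝 0) ↔
      Tendsto (fun v => ‖f v‖) (comap T.level atTop) (𝓝 0) := by
  refine ⟨fun hf => ?_, T.tendsto_Mp_zero_of_tendsto_norm hp⟩
  have hbound :
      Tendsto (fun v => 2 ^ (1 / p) * T.Mp p (T.level v) f) (comap T.level atTop) (𝓝 0) := by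
    simpa using (hf.comp tendsto_comap).const_mul ((2 : ℝ) ^ (1 / p))
  exact squeeze_zero (fun v => norm_nonneg _) (fun v => T.norm_le_two_rpow_mul_Mp hp f rfl) hbound

theorem Mp_comp_le_mul_normTp (hp : 0 < p) (phi : T.V → T.V) {f : T.V → ℂ} (hf : T.memTp p f)
    (n : ℕ) : T.Mp p n (f ∘ phi) ≤ 2 ^ (1 / p) * T.normTp p f :=
  T.Mp_le_of_forall_norm_le hp
    (mul_nonneg (by positivity) ((T.Mp_nonneg p 0 f).trans (T.Mp_le_normTp hf 0)))
    fun v _ => (T.norm_le_two_rpow_mul_Mp hp f rfl).trans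
      (mul_le_mul_of_nonneg_left (T.Mp_le_normTp hf _) (by positivity))

theorem memTp0_comp (hp : 0 < p) {phi : T.V → T.V}
    (hphi : Tendsto (T.level ∘ phi) (comap T.level atTop) atTop) {f : T.V → ℂ}
    (hf : T.memTp0 p f) : T.memTp0 p (f ∘ phi) :=
  ⟨⟨_, Set.forall_mem_range.2 (T.Mp_comp_le_mul_normTp hp phi hf.1)⟩,
    (T.tendsto_Mp_zero_iff hp _).2 <|
      ((T.tendsto_Mp_zero_iff hp f).1 hf.2).comp (tendsto_comap_iff.2 hphi)⟩

theorem eventually_le_level_of_memTp0_comp (hp : 0 < p) {phi : T.V → T.V} {A : ℕ}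
    (h : T.memTp0 p ((fun w => if T.level w < A then 1 else 0) ∘ phi)) :
    ∀ᶠ v in comap T.level atTop, A ≤ T.level (phi v) := by
  have hsmall := ((T.tendsto_Mp_zero_iff hp _).1 h.2).eventually (gt_mem_nhds one_pos)
  filter_upwards [hsmall] with v hv
  by_contra hlt
  simp [not_le.1 hlt] at hv

end two_homogeneous

end HomTree

/-- On the 2-homogeneous tree, for `1 ≤ p < ∞`, `C_φ` is bounded on `T_{p,0}` iff
`|φ v| → ∞` as `|v| → ∞`. -/
theorem bounded_comp_Tp0_iff_two_homogeneous (T : HomTree 1) (p : ℝ) (hp : 1 ≤ p)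
    (phi : T.V → T.V) :
    T.BoundedCompTp0 p phi ↔
      (∀ A : ℕ, ∃ N : ℕ, ∀ v : T.V, N ≤ T.level v → A ≤ T.level (phi v)) := by
  have hp0 : 0 < p := by linarith
  rw [← T.tendsto_level_comp_iff]
  constructor
  · intro hC
    exact tendsto_atTop.2 fun A =>
      T.eventually_le_level_of_memTp0_comp hp0 (hC.1 _ (T.memTp0_indicator_level_lt hp0 A))
  · intro hphi
    exact ⟨fun f hf => T.memTp0_comp hp0 hphi hf,
      2 ^ (1 / p), fun f hf => ciSup_le (T.Mp_comp_le_mul_normTp hp0 phi hf.1)⟩
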